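/- With d_n the number of bimultus strings of length n, a_n their total bitsum, and b_n their total squared bitsum, set c_n = d_n b_n - a_n^2. Then lim_{n→∞} c_n/(n d_n^2) = (5 + 3√5)/40. -/

import Mathlib

open scoped Classical

def Multus {n : ℕ} (f : Fin n → Bool) : Prop :=
  ∀ i : Fin n, f i = true →
    ∃ j : Fin n, (j.val = i.val + 1 ∨ j.val + 1 = i.val) ∧ f j = true

def ZeroNbr {n : ℕ} (f : Fin n → Bool) : Prop :=
  ∀ i : Fin n, f i = false →
    ∃ j : Fin n, (j.val = i.val + 1 ∨ j.val + 1 = i.val) ∧ f j = false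

def Bimultus {n : ℕ} (f : Fin n → Bool) : Prop := Multus f ∧ ZeroNbr f

def bitsum {n : ℕ} (f : Fin n → Bool) : ℕ := (Finset.univ.filter fun i => f i = true).card

noncomputable def bimultusCount (n : ℕ) : ℕ := Nat.card {f : Fin n → Bool // Bimultus f}

noncomputable def bimultusBitsum (n : ℕ) : ℕ :=
  ∑ f : Fin n → Bool, if Bimultus f then bitsum f else 0

noncomputable def bimultusBitsumSq (n : ℕ) : ℕ :=
  ∑ f : Fin n → Bool, if Bimultus f then (bitsum f) ^ 2 else 0

/-- `c n = d n * b n - a n ^ 2`, so `c n / d n ^ 2` is the bitsum variance. -/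
noncomputable def bimultusC (n : ℕ) : ℤ :=
  (bimultusCount n : ℤ) * bimultusBitsumSq n - (bimultusBitsum n : ℤ) ^ 2

/-!
A string is bimultus iff every position has a neighbour carrying the same bit. Read a string
letter by letter: a prefix is either bimultus, or *pending* (only its last position lacks such a
neighbour). Appending `c` to a bimultus string ending in `b` gives a bimultus string if `c = b` and
a pending one otherwise; a pending string ending in `b` only survives by appending `b`, and then
becomes bimultus.

Along this automaton we track the spin `∑ ±1 = 2 S - n` of a string. Its moments of order 0, 1, 2
on each state satisfy a linear recursion, solved exactly by Fibonacci numbers and a 6-periodic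
sequence. The first moment cancels between the two possible last bits, so `4 c_n = d_n ∑ spin²`,
and the closed forms give
`c_{n+1} / ((n+1) d_{n+1}²) = ((2n+17) F_n + (6n+15) F_{n+1} + O(1)) / (40 (n+1) F_n)`,
which tends to `(2 + 6φ) / 40`.
-/

open Finset Filter Topology

section States

variable {n : ℕ}

def HasTwin (f : Fin n → Bool) (i : Fin n) : Prop :=
  ∃ j : Fin n, (j.val = i.val + 1 ∨ j.val + 1 = i.val) ∧ f j = f i

theorem bimultus_iff_forall_hasTwin (f : Fin n → Bool) : Bimultus f ↔ ∀ i, HasTwin f i := by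
  refine ⟨fun ⟨hone, hzero⟩ i => ?_, fun h => ⟨fun i hi => ?_, fun i hi => ?_⟩⟩
  · cases hfi : f i
    · obtain ⟨j, hj, hfj⟩ := hzero i hfi
      exact ⟨j, hj, hfj.trans hfi.symm⟩
    · obtain ⟨j, hj, hfj⟩ := hone i hfi
      exact ⟨j, hj, hfj.trans hfi.symm⟩
  all_goals obtain ⟨j, hj, hfj⟩ := h i; exact ⟨j, hj, hfj.trans hi⟩

theorem hasTwin_snoc_castSucc (f : Fin (n + 1) → Bool) (c : Bool) (i : Fin (n + 1)) :
    HasTwin (Fin.snoc f c : Fin (n + 2) → Bool) i.castSucc ↔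
      HasTwin f i ∨ (i = Fin.last n ∧ f i = c) := by
  rw [HasTwin, HasTwin, Fin.exists_fin_succ']
  simp only [Fin.snoc_castSucc, Fin.snoc_last, Fin.val_castSucc, Fin.val_last, Fin.ext_iff]
  constructor
  · rintro (h | ⟨hi, hc⟩)
    · exact Or.inl h
    · exact Or.inr ⟨by omega, hc.symm⟩
  · rintro (h | ⟨hi, hc⟩)
    · exact Or.inl h
    · exact Or.inr ⟨Or.inl (by omega), hc.symm⟩

theorem hasTwin_snoc_last (f : Fin (n + 1) → Bool) (c : Bool) :
    HasTwin (Fin.snoc f c : Fin (n + 2) → Bool) (Fin.last (n + 1)) ↔ f (Fin.last n) = c := by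
  rw [HasTwin, Fin.exists_fin_succ']
  simp only [Fin.snoc_castSucc, Fin.snoc_last, Fin.val_castSucc, Fin.val_last]
  constructor
  · rintro (⟨j, hj, hc⟩ | ⟨hj, -⟩)
    · rwa [show j = Fin.last n from Fin.ext (by have := j.isLt; simp; omega)] at hc
    · omega
  · exact fun hc => Or.inl ⟨Fin.last n, Or.inr (by simp), hc⟩

theorem forall_castSucc_hasTwin_snoc (f : Fin (n + 1) → Bool) (c : Bool) :
    (∀ i : Fin (n + 1), HasTwin (Fin.snoc f c : Fin (n + 2) → Bool) i.castSucc) ↔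
      (∀ i : Fin n, HasTwin f i.castSucc) ∧
        (HasTwin f (Fin.last n) ∨ f (Fin.last n) = c) := by
  simp only [hasTwin_snoc_castSucc]
  rw [Fin.forall_fin_succ']
  simp [Fin.castSucc_ne_last]

theorem forall_hasTwin_snoc (f : Fin (n + 1) → Bool) (c : Bool) :
    (∀ i, HasTwin (Fin.snoc f c : Fin (n + 2) → Bool) i) ↔
      (∀ i : Fin n, HasTwin f i.castSucc) ∧ f (Fin.last n) = c := by
  rw [Fin.forall_fin_succ', forall_castSucc_hasTwin_snoc, hasTwin_snoc_last]
  tauto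

noncomputable def bimultusEnding (n : ℕ) (b : Bool) : Finset (Fin (n + 1) → Bool) :=
  {f | Bimultus f ∧ f (Fin.last n) = b}

noncomputable def pendingEnding (n : ℕ) (b : Bool) : Finset (Fin (n + 1) → Bool) :=
  {f | (∀ i : Fin n, HasTwin f i.castSucc) ∧ ¬ HasTwin f (Fin.last n) ∧ f (Fin.last n) = b}

def snocEmb (c : Bool) : (Fin n → Bool) ↪ (Fin (n + 1) → Bool) :=
  ⟨fun f => Fin.snoc f c, fun _ _ h => (Fin.snoc_injective2 h).1⟩

theorem snocEmb_apply (c : Bool) (f : Fin n → Bool) : snocEmb c f = Fin.snoc f c := rfl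

theorem mem_map_snocEmb {s : Finset (Fin n → Bool)} {b c : Bool} {f : Fin n → Bool} :
    Fin.snoc f c ∈ s.map (snocEmb b) ↔ f ∈ s ∧ c = b := by
  rw [Finset.mem_map]
  constructor
  · rintro ⟨g, hg, h⟩
    rw [snocEmb_apply, Fin.snoc_inj] at h
    obtain ⟨rfl, rfl⟩ := h
    exact ⟨hg, rfl⟩
  · rintro ⟨hf, rfl⟩
    exact ⟨f, hf, rfl⟩

theorem exists_eq_snoc (f : Fin (n + 1) → Bool) : ∃ g c, f = Fin.snoc g c :=
  ⟨Fin.init f, f (Fin.last n), (Fin.snoc_init_self f).symm⟩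

theorem bimultusEnding_succ (n : ℕ) (b : Bool) :
    bimultusEnding (n + 1) b = (bimultusEnding n b ∪ pendingEnding n b).map (snocEmb b) := by
  ext f
  obtain ⟨g, c, rfl⟩ := exists_eq_snoc f
  simp only [mem_map_snocEmb, mem_union, bimultusEnding, pendingEnding, mem_filter, mem_univ,
    true_and, bimultus_iff_forall_hasTwin, forall_hasTwin_snoc, Fin.snoc_last,
    Fin.forall_fin_succ' (P := HasTwin g)]
  by_cases h : HasTwin g (Fin.last n) <;> simp only [h] <;> grind

theorem pendingEnding_succ (n : ℕ) (b : Bool) :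
    pendingEnding (n + 1) b = (bimultusEnding n (!b)).map (snocEmb b) := by
  ext f
  obtain ⟨g, c, rfl⟩ := exists_eq_snoc f
  simp only [mem_map_snocEmb, bimultusEnding, pendingEnding, mem_filter, mem_univ, true_and,
    bimultus_iff_forall_hasTwin, forall_castSucc_hasTwin_snoc, hasTwin_snoc_last, Fin.snoc_last,
    Fin.forall_fin_succ' (P := HasTwin g)]
  cases b <;> cases c <;> grind

theorem bimultusEnding_zero (b : Bool) : bimultusEnding 0 b = ∅ := by
  ext f
  simp only [bimultusEnding, mem_filter, mem_univ, true_and, bimultus_iff_forall_hasTwin,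
    Finset.notMem_empty, iff_false, not_and]
  intro h
  obtain ⟨j, hj, -⟩ := h 0
  omega

theorem pendingEnding_zero (b : Bool) : pendingEnding 0 b = {fun _ => b} := by
  ext f
  simp only [pendingEnding, mem_filter, mem_univ, true_and, mem_singleton, IsEmpty.forall_iff]
  constructor
  · rintro ⟨-, h⟩
    funext i
    rw [Subsingleton.elim (α := Fin 1) i (Fin.last 0), h]
  · rintro rfl
    exact ⟨fun ⟨j, hj, _⟩ => by simp at hj, rfl⟩

theorem disjoint_bimultusEnding_pendingEnding (n : ℕ) (b : Bool) :
    Disjoint (bimultusEnding n b) (pendingEnding n b) := by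
  simp only [bimultusEnding, pendingEnding, disjoint_filter, bimultus_iff_forall_hasTwin]
  exact fun f _ h h' => h'.2.1 (h.1 _)

end States

section Moments

variable {n : ℕ}

def bitSign (b : Bool) : ℤ := if b then 1 else -1

theorem bitSign_not (b : Bool) : bitSign (!b) = -bitSign b := by
  cases b <;> rfl

theorem bitSign_sq (b : Bool) : bitSign b ^ 2 = 1 := by
  cases b <;> rfl

def spin (f : Fin n → Bool) : ℤ := ∑ i, bitSign (f i)

theorem spin_snoc (f : Fin n → Bool) (c : Bool) :
    spin (Fin.snoc f c : Fin (n + 1) → Bool) = spin f + bitSign c := by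
  simp [spin, Fin.sum_univ_castSucc]

theorem spin_eq_two_mul_bitsum_sub (f : Fin n → Bool) : spin f = 2 * bitsum f - n := by
  have hsign (b : Bool) : bitSign b = 2 * (if b = true then 1 else 0) - 1 := by cases b <;> rfl
  simp only [spin, hsign, bitsum, card_filter, sum_sub_distrib, ← mul_sum, sum_const, card_univ,
    Fintype.card_fin]
  push_cast
  ring

def moment (s : Finset (Fin n → Bool)) (k : ℕ) : ℤ := ∑ f ∈ s, spin f ^ k

theorem moment_union {s t : Finset (Fin n → Bool)} (h : Disjoint s t) (k : ℕ) :
    moment (s ∪ t) k = moment s k + moment t k :=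
  sum_union h

theorem moment_map_snocEmb (s : Finset (Fin n → Bool)) (c : Bool) (k : ℕ) :
    moment (s.map (snocEmb c)) k = ∑ f ∈ s, (spin f + bitSign c) ^ k := by
  simp only [moment, sum_map, snocEmb_apply, spin_snoc]

theorem moment_map_snocEmb_zero (s : Finset (Fin n → Bool)) (c : Bool) :
    moment (s.map (snocEmb c)) 0 = moment s 0 := by
  simp [moment]

theorem moment_map_snocEmb_one (s : Finset (Fin n → Bool)) (c : Bool) :
    moment (s.map (snocEmb c)) 1 = moment s 1 + bitSign c * moment s 0 := by
  rw [moment_map_snocEmb]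
  simp [moment, sum_add_distrib, mul_comm]

theorem moment_map_snocEmb_two (s : Finset (Fin n → Bool)) (c : Bool) :
    moment (s.map (snocEmb c)) 2 = moment s 2 + 2 * bitSign c * moment s 1 + moment s 0 := by
  rw [moment_map_snocEmb]
  simp only [moment, add_sq, bitSign_sq, sum_add_distrib, ← sum_mul, ← mul_sum, sum_const,
    pow_zero, nsmul_eq_mul, mul_one, pow_one]
  ring

end Moments

def periodSix : ℕ → ℤ
  | 0 => 0
  | 1 => 1
  | n + 2 => periodSix (n + 1) - periodSix n

theorem periodSix_add_three (n : ℕ) : periodSix (n + 3) = -periodSix n := by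
  simp only [periodSix]
  ring

theorem abs_periodSix_le_one (n : ℕ) : |periodSix n| ≤ 1 := by
  induction n using Nat.strong_induction_on with
  | _ n ih =>
    match n with
    | 0 | 1 | 2 => simp [periodSix]
    | m + 3 => rw [periodSix_add_three, abs_neg]; exact ih m (by omega)

theorem moments_closedForm (n : ℕ) (b : Bool) :
    moment (bimultusEnding n b) 0 = Nat.fib n ∧
    2 * moment (bimultusEnding n b) 1 =
      bitSign b * (2 * Nat.fib n + Nat.fib (n + 1) + 2 * periodSix n - periodSix (n + 1)) ∧
    10 * moment (bimultusEnding n b) 2 = (2 * n + 17) * Nat.fib n + (6 * n + 15) * Nat.fib (n + 1)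
      + 15 * periodSix n - 15 * periodSix (n + 1) ∧
    moment (pendingEnding n b) 0 = Nat.fib (n + 1) - Nat.fib n ∧
    2 * moment (pendingEnding n b) 1 =
      bitSign b * (2 * periodSix (n + 1) - Nat.fib n - periodSix n) ∧
    10 * moment (pendingEnding n b) 2 = (4 * n - 6) * Nat.fib n + (2 * n + 5) * Nat.fib (n + 1)
      - 10 * periodSix n + 5 * periodSix (n + 1) := by
  induction n generalizing b with
  | zero =>
    simp [bimultusEnding_zero, pendingEnding_zero, moment, spin, bitSign_sq, periodSix, mul_comm]
  | succ n ih =>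
    obtain ⟨hB0, hB1, hB2, hP0, hP1, hP2⟩ := ih b
    obtain ⟨hB0', hB1', hB2', -, -, -⟩ := ih (!b)
    rw [bitSign_not] at hB1'
    have hσ := bitSign_sq b
    simp only [bimultusEnding_succ, pendingEnding_succ, moment_map_snocEmb_zero,
      moment_map_snocEmb_one, moment_map_snocEmb_two,
      moment_union (disjoint_bimultusEnding_pendingEnding n b)]
    push_cast [Nat.fib_add_two, periodSix]
    refine ⟨?_, ?_, ?_, ?_, ?_, ?_⟩
    · linear_combination hB0 + hP0
    · linear_combination hB1 + hP1 + 2 * bitSign b * (hB0 + hP0)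
    · linear_combination hB2 + hP2 + 10 * bitSign b * (hB1 + hP1) + 10 * (hB0 + hP0)
        + 10 * (Nat.fib n + Nat.fib (n + 1) + periodSix n + periodSix (n + 1) : ℤ) * hσ
    · linear_combination hB0'
    · linear_combination hB1' + 2 * bitSign b * hB0'
    · linear_combination hB2' + 10 * bitSign b * hB1' + 10 * hB0'
        - 10 * (2 * Nat.fib n + Nat.fib (n + 1) + 2 * periodSix n - periodSix (n + 1) : ℤ) * hσ

theorem sum_bimultus_eq_sum_bimultusEnding {M : Type*} [AddCommMonoid M] (n : ℕ)
    (φ : (Fin (n + 1) → Bool) → M) :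
    ∑ f with Bimultus f, φ f = ∑ b, ∑ f ∈ bimultusEnding n b, φ f := by
  rw [← sum_fiberwise _ (fun f => f (Fin.last n)) φ]
  simp [bimultusEnding, filter_filter]

theorem bimultusCount_succ (n : ℕ) : bimultusCount (n + 1) = 2 * Nat.fib n := by
  have hcard := sum_bimultus_eq_sum_bimultusEnding n (fun _ => (1 : ℤ))
  simp only [sum_const, Fintype.sum_bool] at hcard
  have h0 (b : Bool) : (#(bimultusEnding n b) : ℤ) = Nat.fib n := by
    simpa [moment] using (moments_closedForm n b).1
  rw [bimultusCount, Nat.card_eq_fintype_card, Fintype.card_subtype]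
  simp only [nsmul_eq_mul, mul_one, h0] at hcard
  omega

theorem card_mul_sum_sq_sub_sq_affine {ι R : Type*} [CommRing R] (s : Finset ι) (x : ι → R)
    (α β : R) :
    #s * ∑ i ∈ s, (α * x i + β) ^ 2 - (∑ i ∈ s, (α * x i + β)) ^ 2 =
      α ^ 2 * (#s * ∑ i ∈ s, x i ^ 2 - (∑ i ∈ s, x i) ^ 2) := by
  simp only [add_sq, mul_pow, sum_add_distrib, ← mul_sum, ← sum_mul, sum_const, nsmul_eq_mul]
  ring

theorem four_mul_bimultusC (n : ℕ) :
    4 * bimultusC n = bimultusCount n * ∑ f : Fin n → Bool with Bimultus f, spin f ^ 2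
      - (∑ f : Fin n → Bool with Bimultus f, spin f) ^ 2 := by
  have hspin (f : Fin n → Bool) : spin f = 2 * (bitsum f : ℤ) + -n := by
    rw [spin_eq_two_mul_bitsum_sub, sub_eq_add_neg]
  simp only [hspin, card_mul_sum_sq_sub_sq_affine, bimultusC, bimultusCount, bimultusBitsum,
    bimultusBitsumSq, Nat.card_eq_fintype_card, Fintype.card_subtype, ← sum_filter]
  push_cast
  ring

theorem ten_mul_bimultusC_succ (n : ℕ) :
    10 * bimultusC (n + 1) = Nat.fib n * ((2 * n + 17) * Nat.fib n
      + (6 * n + 15) * Nat.fib (n + 1) + 15 * periodSix n - 15 * periodSix (n + 1)) := by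
  have h4 := four_mul_bimultusC (n + 1)
  simp only [sum_bimultus_eq_sum_bimultusEnding, Fintype.sum_bool, bimultusCount_succ] at h4
  obtain ⟨-, hT1, hT2, -⟩ := moments_closedForm n true
  obtain ⟨-, hF1, hF2, -⟩ := moments_closedForm n false
  simp only [moment, pow_one] at hT1 hT2 hF1 hF2
  norm_num [bitSign] at hT1 hF1
  have hfirst :
      ∑ f ∈ bimultusEnding n true, spin f + ∑ f ∈ bimultusEnding n false, spin f = 0 := by
    linarith
  rw [hfirst] at h4
  push_cast at h4
  apply mul_left_cancel₀ (two_ne_zero' ℤ)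
  linear_combination 5 * h4 + (Nat.fib n : ℤ) * (hT2 + hF2)

theorem tendsto_periodSix_sub_div :
    Tendsto (fun n : ℕ =>
      (periodSix n - periodSix (n + 1) : ℝ) * (((n : ℝ) + 1) * Nat.fib n)⁻¹) atTop (𝓝 0) := by
  refine isBoundedUnder_le_mul_tendsto_zero (isBoundedUnder_of ⟨2, fun n => ?_⟩) ?_
  · have h0 : |(periodSix n : ℝ)| ≤ 1 := by exact_mod_cast abs_periodSix_le_one n
    have h1 : |(periodSix (n + 1) : ℝ)| ≤ 1 := by exact_mod_cast abs_periodSix_le_one (n + 1)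
    simp only [Function.comp_apply, Real.norm_eq_abs]
    linarith [abs_sub (periodSix n : ℝ) (periodSix (n + 1))]
  · refine Tendsto.inv_tendsto_atTop (tendsto_atTop_mono' _ ?_
      (tendsto_atTop_add_const_right _ 1 tendsto_natCast_atTop_atTop))
    filter_upwards [eventually_ge_atTop 1] with n hn
    have : (1 : ℝ) ≤ Nat.fib n := by exact_mod_cast Nat.fib_pos.mpr hn
    nlinarith

theorem tendsto_closedForm_div :
    Tendsto (fun n : ℕ => ((2 * n + 17) * Nat.fib n + (6 * n + 15) * Nat.fib (n + 1)
      + 15 * periodSix n - 15 * periodSix (n + 1) : ℝ) / (40 * (n + 1) * Nat.fib n))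
      atTop (𝓝 ((5 + 3 * √5) / 40)) := by
  have hinv : Tendsto (fun n : ℕ => ((n : ℝ) + 1)⁻¹) atTop (𝓝 0) := by
    simpa using tendsto_one_div_add_atTop_nhds_zero_nat (𝕜 := ℝ)
  have hlim := (((tendsto_fib_succ_div_fib_atTop.const_mul 6).const_add 2).add
    ((((tendsto_fib_succ_div_fib_atTop.const_mul 9).const_add 15)).mul hinv)).add
    (tendsto_periodSix_sub_div.const_mul 15)
  rw [show (5 + 3 * √5) / 40 =
      (2 + 6 * Real.goldenRatio + (15 + 9 * Real.goldenRatio) * 0 + 15 * 0) / 40 by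
    rw [Real.goldenRatio]; ring]
  refine (hlim.div_const 40).congr' ?_
  filter_upwards [eventually_ge_atTop 1] with n hn
  have : (0 : ℝ) < Nat.fib n := by exact_mod_cast Nat.fib_pos.mpr hn
  field_simp
  ring

/-- The variance of the bitsum density for bimultus strings tends to `(5 + 3√5)/40`. -/
theorem bimultus_variance_limit :
    Filter.Tendsto (fun n : ℕ => (bimultusC n : ℝ) / (n * (bimultusCount n : ℝ) ^ 2))
      Filter.atTop (nhds ((5 + 3 * Real.sqrt 5) / 40)) := by
  rw [← tendsto_add_atTop_iff_nat 1]
  refine tendsto_closedForm_div.congr' ?_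
  filter_upwards [eventually_ge_atTop 1] with n hn
  have hfib : (0 : ℝ) < Nat.fib n := by exact_mod_cast Nat.fib_pos.mpr hn
  have hC : (10 * bimultusC (n + 1) : ℝ) = Nat.fib n * ((2 * n + 17) * Nat.fib n
      + (6 * n + 15) * Nat.fib (n + 1) + 15 * periodSix n - 15 * periodSix (n + 1)) := by
    exact_mod_cast ten_mul_bimultusC_succ n
  rw [bimultusCount_succ]
  push_cast
  field_simp
  linear_combination -4 * hC
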